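/- arXiv:1609.00606 — 2 statements merged into one kernel-verified Lean document; each statement's English description precedes it below -/
import Mathlib

section
/- Assume the V structure. (i) If X has strictly positive effects on C at both levels of Y and Y has strictly positive effects on C at both levels of X (i.e., p_{C=1|10} > p_{C=1|00}, p_{C=1|11} > p_{C=1|01}, p_{C=1|01} > p_{C=1|00}, p_{C=1|11} > p_{C=1|10}), or if all four of these effects are strictly negative (all four inequalities reversed), then P(C=0) > 0 and P(C=1) > 0, and there exists c ∈ {0,1} such that cov(X, Y | C=c) < 0. (ii) If X has strictly positive effects on C at both levels of Y and Y has strictly negative effects on C at both levels of X (i.e., p_{C=1|10} > p_{C=1|00}, p_{C=1|11} > p_{C=1|01}, p_{C=1|01} < p_{C=1|00}, p_{C=1|11} < p_{C=1|10}), or vice versa (X strictly negative and Y strictly positive), then P(C=0) > 0 and P(C=1) > 0, and there exists c ∈ {0,1} such that cov(X, Y | C=c) > 0. -/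
open MeasureTheory ProbabilityTheory

variable {Ω : Type*} [MeasurableSpace Ω]

/-- The event that the random variable `X` takes the value `x`. -/
def ev (X : Ω → ℝ) (x : ℝ) : Set Ω := {ω | X ω = x}

/-- The probability of an event, as a real number. -/
noncomputable def pr (P : Measure Ω) (s : Set Ω) : ℝ := (P s).toReal

/-- The conditional probability `P(s | t)`, as a real number. -/
noncomputable def cpr (P : Measure Ω) (s t : Set Ω) : ℝ := pr (P[|t]) s

/-- The covariance of two real-valued random variables. -/
noncomputable def rcov (P : Measure Ω) (X Y : Ω → ℝ) : ℝ :=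
  ∫ ω, (X ω - ∫ ω', X ω' ∂P) * (Y ω - ∫ ω', Y ω' ∂P) ∂P

/-- The conditional covariance of two real-valued random variables given an event. -/
noncomputable def covCond (P : Measure Ω) (X Y : Ω → ℝ) (t : Set Ω) : ℝ :=
  rcov (P[|t]) X Y

/-- The conditional variance of a real-valued random variable given an event. -/
noncomputable def varCond (P : Measure Ω) (X : Ω → ℝ) (t : Set Ω) : ℝ :=
  covCond P X X t

/-- A measurable `{0,1}`-valued random variable. -/
def IsBin (X : Ω → ℝ) : Prop := Measurable X ∧ ∀ ω, X ω = 0 ∨ X ω = 1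

/-!
For binary `X` and `Y`, the covariance of `X` and `Y` given `C = c` is, up to the factor
`P(C = c)⁻²`, the determinant `q₁₁ q₀₀ - q₁₀ q₀₁` of the cell probabilities
`q_xy = P(X = x, Y = y, C = c)`. Independence of `X` and `Y` gives `q_xy = p_xy P(X = x) P(Y = y)`
for `c = 1` and `q_xy = (1 - p_xy) P(X = x) P(Y = y)` for `c = 0`, so the two determinants are
positive multiples of `D₁ = p₁₁ p₀₀ - p₁₀ p₀₁` and `D₀ = (1 - p₁₁)(1 - p₀₀) - (1 - p₁₀)(1 - p₀₁)`.
Since `(1 - p₀₁) D₁ + p₀₁ D₀ = (p₀₁ - p₀₀)(p₀₁ - p₁₁)`, one of `D₀, D₁` is negative whenever `p₀₁`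
lies strictly between `p₀₀` and `p₁₁`, as it does for effects in the same direction. For effects
in opposite directions `p₀₀` lies strictly between `p₀₁` and `p₁₀`, and the same identity with the
levels of `Y` swapped makes one of `D₀, D₁` positive.
-/

namespace IsBin

variable {X : Ω → ℝ}

lemma measurableSet_ev (hX : IsBin X) (x : ℝ) : MeasurableSet (ev X x) :=
  hX.1 (measurableSet_singleton x)

lemma ev_zero (hX : IsBin X) : ev X 0 = (ev X 1)ᶜ := by
  ext ω
  rcases hX.2 ω with h | h <;> simp [ev, h]

lemma eq_indicator (hX : IsBin X) : X = (ev X 1).indicator 1 := by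
  funext ω
  rcases hX.2 ω with h | h <;> simp [ev, Set.indicator, h]

lemma memLp (hX : IsBin X) (μ : Measure Ω) [IsFiniteMeasure μ] (p : ENNReal) : MemLp X p μ := by
  rw [hX.eq_indicator]
  exact (memLp_const 1).indicator (hX.measurableSet_ev 1)

lemma integral_eq (hX : IsBin X) (μ : Measure Ω) : ∫ ω, X ω ∂μ = μ.real (ev X 1) := by
  conv_lhs => rw [hX.eq_indicator]
  exact integral_indicator_one (hX.measurableSet_ev 1)

lemma measureReal_inter_add (hX : IsBin X) (μ : Measure Ω) [IsFiniteMeasure μ] (s : Set Ω) :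
    μ.real (s ∩ ev X 1) + μ.real (s ∩ ev X 0) = μ.real s := by
  rw [hX.ev_zero, ← Set.sdiff_eq]
  exact measureReal_inter_add_sdiff (hX.measurableSet_ev 1)

lemma pr_ev_zero (hX : IsBin X) (P : Measure Ω) [IsProbabilityMeasure P] :
    pr P (ev X 0) = 1 - pr P (ev X 1) := by
  rw [hX.ev_zero]
  exact probReal_compl_eq_one_sub (hX.measurableSet_ev 1)

lemma pr_ev_pos (hX : IsBin X) {P : Measure Ω} [IsProbabilityMeasure P]
    (h₀ : 0 < pr P (ev X 1)) (h₁ : pr P (ev X 1) < 1) {x : ℝ} (hx : x = 0 ∨ x = 1) :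
    0 < pr P (ev X x) := by
  rcases hx with rfl | rfl
  · rw [hX.pr_ev_zero]
    exact sub_pos.2 h₁
  · exact h₀

end IsBin

section ConditionalProbability

variable {P : Measure Ω} [IsFiniteMeasure P] {s A : Set Ω}

lemma pr_inter_eq_cpr_mul (hs : MeasurableSet s) (A : Set Ω) :
    pr P (s ∩ A) = cpr P A s * pr P s := by
  rw [pr, ← cond_mul_eq_inter hs, ENNReal.toReal_mul]
  rfl

lemma pr_inter_compl_eq_one_sub_cpr_mul (hs : MeasurableSet s) (hA : MeasurableSet A) :
    pr P (s ∩ Aᶜ) = (1 - cpr P A s) * pr P s := by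
  rw [one_sub_mul, ← pr_inter_eq_cpr_mul hs, eq_sub_iff_add_eq', ← Set.sdiff_eq]
  exact measureReal_inter_add_sdiff hA

lemma pr_pos_of_cpr_pos (h : 0 < cpr P A s) : 0 < pr P A :=
  ENNReal.toReal_pos (fun hA => h.ne' (by simp [cpr, pr, cond_absolutelyContinuous hA]))
    (measure_ne_top P A)

lemma pr_compl_pos_of_cpr_lt_one (hs : MeasurableSet s) (hA : MeasurableSet A)
    (hpos : 0 < pr P s) (h : cpr P A s < 1) : 0 < pr P Aᶜ :=
  calc 0 < (1 - cpr P A s) * pr P s := mul_pos (sub_pos.2 h) hpos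
    _ = pr P (s ∩ Aᶜ) := (pr_inter_compl_eq_one_sub_cpr_mul hs hA).symm
    _ ≤ pr P Aᶜ := measureReal_mono Set.inter_subset_right

end ConditionalProbability

lemma ProbabilityTheory.IndepFun.pr_ev_inter_ev {P : Measure Ω} {X Y : Ω → ℝ}
    (hXY : IndepFun X Y P) (x y : ℝ) :
    pr P (ev X x ∩ ev Y y) = pr P (ev X x) * pr P (ev Y y) := by
  rw [pr, pr, pr, ← ENNReal.toReal_mul]
  exact congrArg ENNReal.toReal
    (hXY.measure_inter_preimage_eq_mul _ _ (measurableSet_singleton x) (measurableSet_singleton y))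

lemma rcov_eq_covariance (μ : Measure Ω) (X Y : Ω → ℝ) : rcov μ X Y = cov[X, Y; μ] := rfl

theorem covariance_eq_of_isBin (μ : Measure Ω) [IsProbabilityMeasure μ] {X Y : Ω → ℝ}
    (hX : IsBin X) (hY : IsBin Y) :
    cov[X, Y; μ] = μ.real (ev X 1 ∩ ev Y 1) * μ.real (ev X 0 ∩ ev Y 0)
      - μ.real (ev X 1 ∩ ev Y 0) * μ.real (ev X 0 ∩ ev Y 1) := by
  have hXY : X * Y = (ev X 1 ∩ ev Y 1).indicator 1 := by
    rw [Set.inter_indicator_one, ← hX.eq_indicator, ← hY.eq_indicator]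
  have hX1 := hY.measureReal_inter_add μ (ev X 1)
  have hX0 := hY.measureReal_inter_add μ (ev X 0)
  have hY1 := hX.measureReal_inter_add μ (ev Y 1)
  have htotal := hX.measureReal_inter_add μ Set.univ
  rw [Set.inter_comm (ev Y 1), Set.inter_comm (ev Y 1)] at hY1
  rw [Set.univ_inter, Set.univ_inter, probReal_univ, ← hX1, ← hX0] at htotal
  rw [covariance_eq_sub (hX.memLp μ 2) (hY.memLp μ 2), hXY,
    integral_indicator_one ((hX.measurableSet_ev 1).inter (hY.measurableSet_ev 1)),
    hX.integral_eq, hY.integral_eq, ← hX1, ← hY1]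
  linear_combination (-μ.real (ev X 1 ∩ ev Y 1)) * htotal

theorem covCond_mul_sq_of_isBin {P : Measure Ω} [IsFiniteMeasure P] {X Y : Ω → ℝ}
    (hX : IsBin X) (hY : IsBin Y) {t : Set Ω} (ht : MeasurableSet t) :
    covCond P X Y t * pr P t ^ 2
      = pr P (ev X 1 ∩ ev Y 1 ∩ t) * pr P (ev X 0 ∩ ev Y 0 ∩ t)
        - pr P (ev X 1 ∩ ev Y 0 ∩ t) * pr P (ev X 0 ∩ ev Y 1 ∩ t) := by
  rcases eq_or_ne (P t) 0 with h | h
  · have hnull (s : Set Ω) : P (s ∩ t) = 0 := measure_mono_null Set.inter_subset_right h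
    simp [pr, h, hnull]
  · have := cond_isProbabilityMeasure h
    have hcond (s : Set Ω) : P[|t].real s = pr P (s ∩ t) / pr P t := by
      rw [measureReal_def, cond_apply ht, ENNReal.toReal_mul, ENNReal.toReal_inv, Set.inter_comm,
        inv_mul_eq_div, pr, pr]
    have hne : pr P t ≠ 0 := ENNReal.toReal_ne_zero.2 ⟨h, measure_ne_top P t⟩
    rw [covCond, rcov_eq_covariance, covariance_eq_of_isBin _ hX hY]
    simp only [hcond]
    field_simp

theorem covCond_mul_sq_eq_of_indepFun {P : Measure Ω} [IsFiniteMeasure P] {X Y : Ω → ℝ}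
    (hX : IsBin X) (hY : IsBin Y) (hXY : IndepFun X Y P) {t : Set Ω} (ht : MeasurableSet t)
    (f : ℝ → ℝ → ℝ) (hf : ∀ x y, pr P (ev X x ∩ ev Y y ∩ t) = f x y * pr P (ev X x ∩ ev Y y)) :
    covCond P X Y t * pr P t ^ 2
      = pr P (ev X 1) * pr P (ev X 0) * (pr P (ev Y 1) * pr P (ev Y 0))
        * (f 1 1 * f 0 0 - f 1 0 * f 0 1) := by
  rw [covCond_mul_sq_of_isBin hX hY ht]
  simp only [hf, hXY.pr_ev_inter_ev]
  ring

lemma mem_Ioo_of_sub_mul_sub_neg {a b c : ℝ} (ha₀ : 0 ≤ a) (ha₁ : a ≤ 1) (hc₀ : 0 ≤ c)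
    (hc₁ : c ≤ 1) (h : (b - a) * (b - c) < 0) : b ∈ Set.Ioo 0 1 := by
  rcases mul_neg_iff.1 h with ⟨h₁, h₂⟩ | ⟨h₁, h₂⟩ <;> constructor <;> linarith

lemma neg_or_neg_of_sub_mul_sub_neg {p00 p01 p10 p11 : ℝ} (h₀ : 0 ≤ p01) (h₁ : p01 ≤ 1)
    (h : (p01 - p00) * (p01 - p11) < 0) :
    p11 * p00 - p10 * p01 < 0 ∨ (1 - p11) * (1 - p00) - (1 - p10) * (1 - p01) < 0 := by
  have key : (1 - p01) * (p11 * p00 - p10 * p01)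
      + p01 * ((1 - p11) * (1 - p00) - (1 - p10) * (1 - p01)) = (p01 - p00) * (p01 - p11) := by
    ring
  by_contra! hD
  linarith [mul_nonneg (sub_nonneg.2 h₁) hD.1, mul_nonneg h₀ hD.2]

structure VStructure (P : Measure Ω) (X Y C : Ω → ℝ) : Prop where
  isBin_X : IsBin X
  isBin_Y : IsBin Y
  isBin_C : IsBin C
  indepFun : IndepFun X Y P
  pr_X_pos : 0 < pr P (ev X 1)
  pr_X_lt_one : pr P (ev X 1) < 1
  pr_Y_pos : 0 < pr P (ev Y 1)
  pr_Y_lt_one : pr P (ev Y 1) < 1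

namespace VStructure

variable {P : Measure Ω} {X Y C : Ω → ℝ}

lemma measurableSet_cell (hV : VStructure P X Y C) (x y : ℝ) :
    MeasurableSet (ev X x ∩ ev Y y) :=
  (hV.isBin_X.measurableSet_ev x).inter (hV.isBin_Y.measurableSet_ev y)

variable [IsProbabilityMeasure P]

lemma pr_ev_X_pos (hV : VStructure P X Y C) {x : ℝ} (hx : x = 0 ∨ x = 1) :
    0 < pr P (ev X x) :=
  hV.isBin_X.pr_ev_pos hV.pr_X_pos hV.pr_X_lt_one hx

lemma pr_ev_Y_pos (hV : VStructure P X Y C) {y : ℝ} (hy : y = 0 ∨ y = 1) :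
    0 < pr P (ev Y y) :=
  hV.isBin_Y.pr_ev_pos hV.pr_Y_pos hV.pr_Y_lt_one hy

lemma marginals_prod_pos (hV : VStructure P X Y C) :
    0 < pr P (ev X 1) * pr P (ev X 0) * (pr P (ev Y 1) * pr P (ev Y 0)) :=
  mul_pos (mul_pos (hV.pr_ev_X_pos (.inr rfl)) (hV.pr_ev_X_pos (.inl rfl)))
    (mul_pos (hV.pr_ev_Y_pos (.inr rfl)) (hV.pr_ev_Y_pos (.inl rfl)))

lemma pr_cell_pos (hV : VStructure P X Y C) {x y : ℝ} (hx : x = 0 ∨ x = 1)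
    (hy : y = 0 ∨ y = 1) : 0 < pr P (ev X x ∩ ev Y y) := by
  rw [hV.indepFun.pr_ev_inter_ev]
  exact mul_pos (hV.pr_ev_X_pos hx) (hV.pr_ev_Y_pos hy)

lemma covCond_ev_one_mul_sq (hV : VStructure P X Y C) :
    covCond P X Y (ev C 1) * pr P (ev C 1) ^ 2
      = pr P (ev X 1) * pr P (ev X 0) * (pr P (ev Y 1) * pr P (ev Y 0))
        * (cpr P (ev C 1) (ev X 1 ∩ ev Y 1) * cpr P (ev C 1) (ev X 0 ∩ ev Y 0)
          - cpr P (ev C 1) (ev X 1 ∩ ev Y 0) * cpr P (ev C 1) (ev X 0 ∩ ev Y 1)) :=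
  covCond_mul_sq_eq_of_indepFun hV.isBin_X hV.isBin_Y hV.indepFun
    (hV.isBin_C.measurableSet_ev 1) _
    fun x y => pr_inter_eq_cpr_mul (hV.measurableSet_cell x y) _

lemma covCond_ev_zero_mul_sq (hV : VStructure P X Y C) :
    covCond P X Y (ev C 0) * pr P (ev C 0) ^ 2
      = pr P (ev X 1) * pr P (ev X 0) * (pr P (ev Y 1) * pr P (ev Y 0))
        * ((1 - cpr P (ev C 1) (ev X 1 ∩ ev Y 1)) * (1 - cpr P (ev C 1) (ev X 0 ∩ ev Y 0))
          - (1 - cpr P (ev C 1) (ev X 1 ∩ ev Y 0)) * (1 - cpr P (ev C 1) (ev X 0 ∩ ev Y 1))) := by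
  rw [hV.isBin_C.ev_zero]
  exact covCond_mul_sq_eq_of_indepFun hV.isBin_X hV.isBin_Y hV.indepFun
    (hV.isBin_C.measurableSet_ev 1).compl _
    fun x y => pr_inter_compl_eq_one_sub_cpr_mul (hV.measurableSet_cell x y)
      (hV.isBin_C.measurableSet_ev 1)

theorem exists_covCond_neg_of_between (hV : VStructure P X Y C)
    (h : (cpr P (ev C 1) (ev X 0 ∩ ev Y 1) - cpr P (ev C 1) (ev X 0 ∩ ev Y 0))
      * (cpr P (ev C 1) (ev X 0 ∩ ev Y 1) - cpr P (ev C 1) (ev X 1 ∩ ev Y 1)) < 0) :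
    0 < pr P (ev C 0) ∧ 0 < pr P (ev C 1) ∧
      ∃ c : ℝ, (c = 0 ∨ c = 1) ∧ covCond P X Y (ev C c) < 0 := by
  obtain ⟨hp₀, hp₁⟩ := mem_Ioo_of_sub_mul_sub_neg measureReal_nonneg measureReal_le_one
    measureReal_nonneg measureReal_le_one h
  refine ⟨?_, pr_pos_of_cpr_pos hp₀, ?_⟩
  · rw [hV.isBin_C.ev_zero]
    exact pr_compl_pos_of_cpr_lt_one (hV.measurableSet_cell 0 1)
      (hV.isBin_C.measurableSet_ev 1)
      (hV.pr_cell_pos (.inl rfl) (.inr rfl)) hp₁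
  rcases neg_or_neg_of_sub_mul_sub_neg (p10 := cpr P (ev C 1) (ev X 1 ∩ ev Y 0))
    hp₀.le hp₁.le h with hD | hD
  · refine ⟨1, .inr rfl, neg_of_mul_neg_left ?_ (sq_nonneg (pr P (ev C 1)))⟩
    rw [hV.covCond_ev_one_mul_sq]
    exact mul_neg_of_pos_of_neg hV.marginals_prod_pos hD
  · refine ⟨0, .inl rfl, neg_of_mul_neg_left ?_ (sq_nonneg (pr P (ev C 0)))⟩
    rw [hV.covCond_ev_zero_mul_sq]
    exact mul_neg_of_pos_of_neg hV.marginals_prod_pos hD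

theorem exists_covCond_pos_of_between (hV : VStructure P X Y C)
    (h : (cpr P (ev C 1) (ev X 0 ∩ ev Y 0) - cpr P (ev C 1) (ev X 0 ∩ ev Y 1))
      * (cpr P (ev C 1) (ev X 0 ∩ ev Y 0) - cpr P (ev C 1) (ev X 1 ∩ ev Y 0)) < 0) :
    0 < pr P (ev C 0) ∧ 0 < pr P (ev C 1) ∧
      ∃ c : ℝ, (c = 0 ∨ c = 1) ∧ covCond P X Y (ev C c) > 0 := by
  obtain ⟨hp₀, hp₁⟩ := mem_Ioo_of_sub_mul_sub_neg measureReal_nonneg measureReal_le_one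
    measureReal_nonneg measureReal_le_one h
  refine ⟨?_, pr_pos_of_cpr_pos hp₀, ?_⟩
  · rw [hV.isBin_C.ev_zero]
    exact pr_compl_pos_of_cpr_lt_one (hV.measurableSet_cell 0 0)
      (hV.isBin_C.measurableSet_ev 1)
      (hV.pr_cell_pos (.inl rfl) (.inl rfl)) hp₁
  rcases neg_or_neg_of_sub_mul_sub_neg (p10 := cpr P (ev C 1) (ev X 1 ∩ ev Y 1))
    hp₀.le hp₁.le h with hD | hD
  · refine ⟨1, .inr rfl, pos_of_mul_pos_left ?_ (sq_nonneg (pr P (ev C 1)))⟩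
    rw [hV.covCond_ev_one_mul_sq]
    exact mul_pos hV.marginals_prod_pos (by linarith)
  · refine ⟨0, .inl rfl, pos_of_mul_pos_left ?_ (sq_nonneg (pr P (ev C 0)))⟩
    rw [hV.covCond_ev_zero_mul_sq]
    exact mul_pos hV.marginals_prod_pos (by linarith)

end VStructure

/-- Corollary 1 on the sign of V-bias: (i) if the effects of `X` and `Y` on `C` are in the same
direction, V-bias is negative for at least one level of `C`; (ii) if they are in opposite
directions, V-bias is positive for at least one level of `C`. -/
theorem V_bias_sign_same_or_opposite_effects (P : Measure Ω) [IsProbabilityMeasure P]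
    (X Y C : Ω → ℝ) (hX : IsBin X) (hY : IsBin Y) (hC : IsBin C)
    (hindep : IndepFun X Y P)
    (hX1 : 0 < pr P (ev X 1)) (hX1' : pr P (ev X 1) < 1)
    (hY1 : 0 < pr P (ev Y 1)) (hY1' : pr P (ev Y 1) < 1) :
    (((cpr P (ev C 1) (ev X 1 ∩ ev Y 0) > cpr P (ev C 1) (ev X 0 ∩ ev Y 0) ∧
        cpr P (ev C 1) (ev X 1 ∩ ev Y 1) > cpr P (ev C 1) (ev X 0 ∩ ev Y 1) ∧
        cpr P (ev C 1) (ev X 0 ∩ ev Y 1) > cpr P (ev C 1) (ev X 0 ∩ ev Y 0) ∧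
        cpr P (ev C 1) (ev X 1 ∩ ev Y 1) > cpr P (ev C 1) (ev X 1 ∩ ev Y 0)) ∨
      (cpr P (ev C 1) (ev X 1 ∩ ev Y 0) < cpr P (ev C 1) (ev X 0 ∩ ev Y 0) ∧
        cpr P (ev C 1) (ev X 1 ∩ ev Y 1) < cpr P (ev C 1) (ev X 0 ∩ ev Y 1) ∧
        cpr P (ev C 1) (ev X 0 ∩ ev Y 1) < cpr P (ev C 1) (ev X 0 ∩ ev Y 0) ∧
        cpr P (ev C 1) (ev X 1 ∩ ev Y 1) < cpr P (ev C 1) (ev X 1 ∩ ev Y 0))) →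
      (0 < pr P (ev C 0) ∧ 0 < pr P (ev C 1) ∧
        ∃ c : ℝ, (c = 0 ∨ c = 1) ∧ covCond P X Y (ev C c) < 0)) ∧
    (((cpr P (ev C 1) (ev X 1 ∩ ev Y 0) > cpr P (ev C 1) (ev X 0 ∩ ev Y 0) ∧
        cpr P (ev C 1) (ev X 1 ∩ ev Y 1) > cpr P (ev C 1) (ev X 0 ∩ ev Y 1) ∧
        cpr P (ev C 1) (ev X 0 ∩ ev Y 1) < cpr P (ev C 1) (ev X 0 ∩ ev Y 0) ∧
        cpr P (ev C 1) (ev X 1 ∩ ev Y 1) < cpr P (ev C 1) (ev X 1 ∩ ev Y 0)) ∨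
      (cpr P (ev C 1) (ev X 1 ∩ ev Y 0) < cpr P (ev C 1) (ev X 0 ∩ ev Y 0) ∧
        cpr P (ev C 1) (ev X 1 ∩ ev Y 1) < cpr P (ev C 1) (ev X 0 ∩ ev Y 1) ∧
        cpr P (ev C 1) (ev X 0 ∩ ev Y 1) > cpr P (ev C 1) (ev X 0 ∩ ev Y 0) ∧
        cpr P (ev C 1) (ev X 1 ∩ ev Y 1) > cpr P (ev C 1) (ev X 1 ∩ ev Y 0))) →
      (0 < pr P (ev C 0) ∧ 0 < pr P (ev C 1) ∧
        ∃ c : ℝ, (c = 0 ∨ c = 1) ∧ covCond P X Y (ev C c) > 0)) := by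
  have hV : VStructure P X Y C := ⟨hX, hY, hC, hindep, hX1, hX1', hY1, hY1'⟩
  refine ⟨fun h => hV.exists_covCond_neg_of_between ?_,
    fun h => hV.exists_covCond_pos_of_between ?_⟩
  · rcases h with ⟨-, h11, h01, -⟩ | ⟨-, h11, h01, -⟩
    · exact mul_neg_of_pos_of_neg (sub_pos.2 h01) (sub_neg.2 h11)
    · exact mul_neg_of_neg_of_pos (sub_neg.2 h01) (sub_pos.2 h11)
  · rcases h with ⟨h10, -, h01, -⟩ | ⟨h10, -, h01, -⟩
    · exact mul_neg_of_pos_of_neg (sub_pos.2 h01) (sub_neg.2 h10)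
    · exact mul_neg_of_neg_of_pos (sub_neg.2 h01) (sub_pos.2 h10)
end

section
/- Let X, Y, C be {0,1}-valued random variables on a probability space with P(X=x, Y=y) > 0 for all x, y ∈ {0,1}, and let c ∈ {0,1} be such that p_{c|xy} := P(C=c | X=x, Y=y) > 0 for all x, y ∈ {0,1}. Then the conditional odds ratio of Y on X given C=c equals the marginal odds ratio times a bias factor: [ P(Y=1 | X=1, C=c) / P(Y=0 | X=1, C=c) ] / [ P(Y=1 | X=0, C=c) / P(Y=0 | X=0, C=c) ] = ( [ P(Y=1 | X=1) / P(Y=0 | X=1) ] / [ P(Y=1 | X=0) / P(Y=0 | X=0) ] ) · ( p_{c|00}·p_{c|11} ) / ( p_{c|10}·p_{c|01} ). (This is the ∇ structure, where X and Y need not be independent.) -/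
open MeasureTheory ProbabilityTheory

variable {Ω : Type*} [MeasurableSpace Ω]

lemma cpr_eq_div (P : Measure Ω) [IsProbabilityMeasure P] {s t : Set Ω}
    (ht : MeasurableSet t) : cpr P s t = pr P (t ∩ s) / pr P t := by
  unfold cpr pr
  rw [ProbabilityTheory.cond_apply ht, ENNReal.toReal_mul, ENNReal.toReal_inv]
  ring

lemma pr_mono (P : Measure Ω) [IsProbabilityMeasure P] {s t : Set Ω} (h : s ⊆ t) :
    pr P s ≤ pr P t :=
  ENNReal.toReal_mono (measure_ne_top P t) (measure_mono h)

lemma ev_measurable {X : Ω → ℝ} (hX : IsBin X) (x : ℝ) : MeasurableSet (ev X x) :=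
  hX.1 (measurableSet_singleton x)

/-- ∇-bias on the odds ratio scale: the conditional odds ratio given `C = c` equals the
marginal odds ratio times the bias factor, with no independence assumed between `X` and `Y`. -/
theorem nabla_bias_or (P : Measure Ω) [IsProbabilityMeasure P]
    (X Y C : Ω → ℝ) (hX : IsBin X) (hY : IsBin Y) (hC : IsBin C)
    (hXY : ∀ x y : ℝ, (x = 0 ∨ x = 1) → (y = 0 ∨ y = 1) → 0 < pr P (ev X x ∩ ev Y y))
    (c : ℝ) (hc : c = 0 ∨ c = 1)
    (hpos : ∀ x y : ℝ, (x = 0 ∨ x = 1) → (y = 0 ∨ y = 1) →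
      0 < cpr P (ev C c) (ev X x ∩ ev Y y)) :
    (cpr P (ev Y 1) (ev X 1 ∩ ev C c) / cpr P (ev Y 0) (ev X 1 ∩ ev C c)) /
        (cpr P (ev Y 1) (ev X 0 ∩ ev C c) / cpr P (ev Y 0) (ev X 0 ∩ ev C c)) =
      ((cpr P (ev Y 1) (ev X 1) / cpr P (ev Y 0) (ev X 1)) /
          (cpr P (ev Y 1) (ev X 0) / cpr P (ev Y 0) (ev X 0))) *
        (cpr P (ev C c) (ev X 0 ∩ ev Y 0) * cpr P (ev C c) (ev X 1 ∩ ev Y 1)) /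
        (cpr P (ev C c) (ev X 1 ∩ ev Y 0) * cpr P (ev C c) (ev X 0 ∩ ev Y 1)) := by
  have mX := ev_measurable hX
  have mY := ev_measurable hY
  -- positivity of the triple intersections
  have key : ∀ x y : ℝ, (x = 0 ∨ x = 1) → (y = 0 ∨ y = 1) →
      0 < pr P (ev X x ∩ ev Y y ∩ ev C c) := by
    intro x y hx hy
    have hq := hpos x y hx hy
    rw [cpr_eq_div P ((mX x).inter (mY y))] at hq
    have hp := hXY x y hx hy
    have h2 := mul_pos hq hp
    rwa [div_mul_cancel₀ _ (ne_of_gt hp)] at h2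
  have h0 : (0:ℝ) = 0 ∨ (0:ℝ) = 1 := Or.inl rfl
  have h1 : (1:ℝ) = 0 ∨ (1:ℝ) = 1 := Or.inr rfl
  have a00 := key 0 0 h0 h0
  have a01 := key 0 1 h0 h1
  have a10 := key 1 0 h1 h0
  have a11 := key 1 1 h1 h1
  have p00 := hXY 0 0 h0 h0
  have p01 := hXY 0 1 h0 h1
  have p10 := hXY 1 0 h1 h0
  have p11 := hXY 1 1 h1 h1
  -- positivity of pr P (ev X x ∩ ev C c)
  have hsub : ∀ x y : ℝ, ev X x ∩ ev Y y ∩ ev C c ⊆ ev X x ∩ ev C c := by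
    intro x y ω hω; exact ⟨hω.1.1, hω.2⟩
  have d0 : 0 < pr P (ev X 0 ∩ ev C c) := lt_of_lt_of_le a00 (pr_mono P (hsub 0 0))
  have d1 : 0 < pr P (ev X 1 ∩ ev C c) := lt_of_lt_of_le a10 (pr_mono P (hsub 1 0))
  -- positivity of pr P (ev X x)
  have m0 : 0 < pr P (ev X 0) := lt_of_lt_of_le p00 (pr_mono P Set.inter_subset_left)
  have m1 : 0 < pr P (ev X 1) := lt_of_lt_of_le p10 (pr_mono P Set.inter_subset_left)
  -- rewrite all conditional probabilities
  have hset : ∀ x y : ℝ, (ev X x ∩ ev C c) ∩ ev Y y = ev X x ∩ ev Y y ∩ ev C c := by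
    intro x y; exact Set.inter_right_comm _ _ _
  rw [cpr_eq_div P ((mX 1).inter (ev_measurable hC c)),
      cpr_eq_div P ((mX 1).inter (ev_measurable hC c)),
      cpr_eq_div P ((mX 0).inter (ev_measurable hC c)),
      cpr_eq_div P ((mX 0).inter (ev_measurable hC c)),
      cpr_eq_div P (mX 1), cpr_eq_div P (mX 1),
      cpr_eq_div P (mX 0), cpr_eq_div P (mX 0),
      cpr_eq_div P ((mX 0).inter (mY 0)), cpr_eq_div P ((mX 1).inter (mY 1)),
      cpr_eq_div P ((mX 1).inter (mY 0)), cpr_eq_div P ((mX 0).inter (mY 1)),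
      hset 1 1, hset 1 0, hset 0 1, hset 0 0]
  field_simp
end
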